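/- Let a, b, P > 0, let n1 ≥ n2 ≥ 1 be natural numbers with p := n2/n1, and let x ∈ ℝ^{n1} satisfy Σ_{i=1}^{n1} x_i² = n1·P. Let Z = (Z₁,…,Z_{n1}) be i.i.d. standard Gaussian random variables, and define ĩ := Σ_{i=1}^{n2} ℓ_{a,P}(x_i, Z_i) + Σ_{i=n2+1}^{n1} ℓ_{b,P}(x_i, Z_i). Then Var[(1/n1)·ĩ] = (1/n1)·(1/4)·( (p·2a²P² + 4aP)/(1 + aP)² + (1 − p)·2b²P²/(1 + bP)² ) + (1/n1²)·( b/(1 + bP)² − a/(1 + aP)² )·Σ_{i=n2+1}^{n1} x_i². -/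

import Mathlib

open MeasureTheory ProbabilityTheory

/-- Density of the centered Gaussian with standard deviation `σ`. -/
noncomputable def gaussDensity (σ y : ℝ) : ℝ :=
  (1 / (σ * Real.sqrt (2 * Real.pi))) * Real.exp (-(y ^ 2) / (2 * σ ^ 2))

/-- Single-letter modified information density of the Gaussian channel
`Y = √g·X + Z` with reference output distribution `N(0, 1+gP)`. -/
noncomputable def infoDensity1 (g P x z : ℝ) : ℝ :=
  Real.log (gaussDensity 1 z) -
    Real.log (gaussDensity (Real.sqrt (1 + g * P)) (Real.sqrt g * x + z))

/-!
Each letter `ℓ_{g,P}(x, z)` is a quadratic polynomial `C + A z + B z²` in the noise, with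
`A = √g x / (1 + gP)` and `B = -gP / (2 (1 + gP))`. For `Z ~ N(0,1)` its variance is `A² + 2B²`,
since the odd moments vanish and `E Z⁴ = 3` (derivatives at `0` of the mgf `exp (t²/2)`);
the letters are independent, so their variances add. Summing, the power constraint turns
`∑ x_i²` into `n1 P`, and only the tail `∑_{i ≥ n2} x_i²` survives, weighted by the
difference of the two gains' coefficients.
-/

open Real

lemma log_gaussDensity {σ : ℝ} (hσ : 0 < σ) (y : ℝ) :
    log (gaussDensity σ y) = -log σ - log √(2 * π) - y ^ 2 / (2 * σ ^ 2) := by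
  have h2π : 0 < √(2 * π) := by positivity
  rw [gaussDensity, log_mul (by positivity) (exp_ne_zero _), log_exp, one_div, log_inv,
    log_mul hσ.ne' h2π.ne']
  ring

lemma infoDensity1_eq_quadratic {g P : ℝ} (hg : 0 ≤ g) (hgP : 0 < 1 + g * P) (x z : ℝ) :
    infoDensity1 g P x z
      = (log √(1 + g * P) + g * x ^ 2 / (2 * (1 + g * P)))
        + √g * x / (1 + g * P) * z + -(g * P) / (2 * (1 + g * P)) * z ^ 2 := by
  have hsg : √g ^ 2 = g := sq_sqrt hg
  rw [infoDensity1, log_gaussDensity one_pos, log_gaussDensity (sqrt_pos.mpr hgP),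
    sq_sqrt hgP.le, log_one]
  field_simp
  linear_combination x ^ 2 * hsg

lemma iteratedDeriv_succ_exp_half_sq {n : ℕ} {p p' q : ℝ → ℝ}
    (hn : iteratedDeriv n (fun s => exp (s ^ 2 / 2)) = fun s => p s * exp (s ^ 2 / 2))
    (hp : ∀ t, HasDerivAt p (p' t) t) (hq : ∀ t, p' t + t * p t = q t) :
    iteratedDeriv (n + 1) (fun s => exp (s ^ 2 / 2)) = fun t => q t * exp (t ^ 2 / 2) := by
  rw [iteratedDeriv_succ, hn]
  refine funext fun t => HasDerivAt.deriv ?_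
  have he : HasDerivAt (fun s => exp (s ^ 2 / 2)) (exp (t ^ 2 / 2) * t) t := by
    simpa using ((hasDerivAt_pow 2 t).div_const 2).exp
  exact ((hp t).mul he).congr_deriv (by rw [← hq]; ring)

lemma iteratedDeriv_exp_half_sq :
    iteratedDeriv 2 (fun s => exp (s ^ 2 / 2)) = (fun t => (1 + t ^ 2) * exp (t ^ 2 / 2)) ∧
    iteratedDeriv 3 (fun s => exp (s ^ 2 / 2)) = (fun t => (3 * t + t ^ 3) * exp (t ^ 2 / 2)) ∧
    iteratedDeriv 4 (fun s => exp (s ^ 2 / 2))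
      = fun t => (3 + 6 * t ^ 2 + t ^ 4) * exp (t ^ 2 / 2) := by
  have h0 : iteratedDeriv 0 (fun s => exp (s ^ 2 / 2)) = fun s => 1 * exp (s ^ 2 / 2) := by
    simp
  have h1 := iteratedDeriv_succ_exp_half_sq h0 (fun t => hasDerivAt_const t 1)
    (q := fun t => t) (fun t => by ring)
  have h2 := iteratedDeriv_succ_exp_half_sq h1 (fun t => hasDerivAt_id t)
    (q := fun t => 1 + t ^ 2) (fun t => by ring)
  have h3 := iteratedDeriv_succ_exp_half_sq h2
    (fun t => (hasDerivAt_pow 2 t).const_add 1) (q := fun t => 3 * t + t ^ 3)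
    (fun t => by push_cast; ring)
  have h4 := iteratedDeriv_succ_exp_half_sq h3
    (fun t => ((hasDerivAt_id t).const_mul 3).add (hasDerivAt_pow 3 t))
    (q := fun t => 3 + 6 * t ^ 2 + t ^ 4) (fun t => by push_cast; ring)
  exact ⟨h2, h3, h4⟩

lemma integral_pow_gaussianReal_zero_one :
    ∫ z, z ^ 2 ∂gaussianReal 0 1 = 1 ∧ ∫ z, z ^ 3 ∂gaussianReal 0 1 = 0 ∧
      ∫ z, z ^ 4 ∂gaussianReal 0 1 = 3 := by
  have hmom (k : ℕ) :
      ∫ z, z ^ k ∂gaussianReal 0 1 = iteratedDeriv k (fun s => exp (s ^ 2 / 2)) 0 := by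
    have hmgf : mgf id (gaussianReal 0 1) = fun s => exp (s ^ 2 / 2) := by
      simp [mgf_id_gaussianReal]
    rw [← hmgf, iteratedDeriv_mgf_zero (by simp)]
    rfl
  obtain ⟨h2, h3, h4⟩ := iteratedDeriv_exp_half_sq
  simp [hmom, h2, h3, h4]

lemma integrable_pow_gaussianReal (μ : ℝ) (v : NNReal) (k : ℕ) :
    Integrable (fun z => z ^ k) (gaussianReal μ v) := by
  refine (integrable_norm_iff (by fun_prop)).mp ?_
  simpa [norm_pow] using (memLp_id_gaussianReal (μ := μ) (v := v) k).integrable_norm_pow'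

lemma integral_quartic_gaussianReal_zero_one (c₀ c₁ c₂ c₃ c₄ : ℝ) :
    ∫ z, (c₀ + c₁ * z + c₂ * z ^ 2 + c₃ * z ^ 3 + c₄ * z ^ 4) ∂gaussianReal 0 1
      = c₀ + c₂ + 3 * c₄ := by
  obtain ⟨h2, h3, h4⟩ := integral_pow_gaussianReal_zero_one
  have hi (c : ℝ) (k : ℕ) : Integrable (fun z => c * z ^ k) (gaussianReal 0 1) :=
    (integrable_pow_gaussianReal 0 1 k).const_mul c
  have hi1 : Integrable (fun z : ℝ => c₁ * z) (gaussianReal 0 1) := by simpa using hi c₁ 1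
  have hi01 := (integrable_const c₀).fun_add hi1
  have hi012 := hi01.fun_add (hi c₂ 2)
  have hi0123 := hi012.fun_add (hi c₃ 3)
  rw [integral_add hi0123 (hi c₄ 4), integral_add hi012 (hi c₃ 3), integral_add hi01 (hi c₂ 2),
    integral_add (integrable_const c₀) hi1]
  simp only [integral_const, probReal_univ, smul_eq_mul, one_mul, integral_const_mul,
    integral_const_mul c₁ (fun z : ℝ => z), integral_id_gaussianReal, h2, h3, h4]
  ring

lemma variance_quadratic_gaussianReal_zero_one (c a b : ℝ) :
    Var[fun z => c + a * z + b * z ^ 2; gaussianReal 0 1] = a ^ 2 + 2 * b ^ 2 := by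
  have hmean : ∫ z, (c + a * z + b * z ^ 2) ∂gaussianReal 0 1 = c + b := by
    simpa using integral_quartic_gaussianReal_zero_one c a b 0 0
  rw [variance_eq_integral (by fun_prop), hmean]
  have hexpand (z : ℝ) : (c + a * z + b * z ^ 2 - (c + b)) ^ 2
      = b ^ 2 + (-2 * a * b) * z + (a ^ 2 - 2 * b ^ 2) * z ^ 2 + (2 * a * b) * z ^ 3
        + b ^ 2 * z ^ 4 := by
    ring
  simp_rw [hexpand, integral_quartic_gaussianReal_zero_one]
  ring

lemma memLp_two_quadratic_gaussianReal_zero_one (c a b : ℝ) :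
    MemLp (fun z => c + a * z + b * z ^ 2) 2 (gaussianReal 0 1) := by
  have hsq : MemLp (fun z : ℝ => z ^ 2) 2 (gaussianReal 0 1) :=
    (memLp_two_iff_integrable_sq (by fun_prop)).mpr
      (by simpa [← pow_mul] using integrable_pow_gaussianReal 0 1 4)
  exact ((memLp_const c).add ((memLp_id_gaussianReal 2).const_mul a)).add (hsq.const_mul b)

lemma variance_infoDensity1 {g P : ℝ} (hg : 0 ≤ g) (hgP : 0 < 1 + g * P) (x : ℝ) :
    Var[infoDensity1 g P x; gaussianReal 0 1]
      = g * x ^ 2 / (1 + g * P) ^ 2 + (g * P) ^ 2 / (2 * (1 + g * P) ^ 2) := by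
  rw [funext (infoDensity1_eq_quadratic hg hgP x), variance_quadratic_gaussianReal_zero_one,
    div_pow, mul_pow, sq_sqrt hg]
  field_simp

lemma memLp_two_infoDensity1 {g P : ℝ} (hg : 0 ≤ g) (hgP : 0 < 1 + g * P) (x : ℝ) :
    MemLp (infoDensity1 g P x) 2 (gaussianReal 0 1) := by
  rw [funext (infoDensity1_eq_quadratic hg hgP x)]
  exact memLp_two_quadratic_gaussianReal_zero_one _ _ _

lemma variance_fun_sum_pi {ι : Type*} [Fintype ι] {Ω : ι → Type*}
    {mΩ : ∀ i, MeasurableSpace (Ω i)} {μ : (i : ι) → Measure (Ω i)}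
    [∀ i, IsProbabilityMeasure (μ i)] {X : Π i, Ω i → ℝ} (h : ∀ i, MemLp (X i) 2 (μ i)) :
    Var[fun ω => ∑ i, X i (ω i); Measure.pi μ] = ∑ i, Var[X i; μ i] := by
  rw [← variance_sum_pi h, Finset.sum_fn]

lemma Fin.sum_ite_val_lt {M : Type*} [AddCommMonoid M] {n m : ℕ} (hmn : m ≤ n) (u v : M) :
    ∑ i : Fin n, (if (i : ℕ) < m then u else v) = m • u + (n - m) • v := by
  have hcard := Finset.card_filter_add_card_filter_not (s := Finset.univ)
    (fun i : Fin n => (i : ℕ) < m)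
  rw [Fin.card_filter_val_lt, Finset.card_univ, Fintype.card_fin] at hcard
  rw [Finset.sum_ite, Finset.sum_const, Finset.sum_const, Fin.card_filter_val_lt,
    min_eq_right hmn]
  congr
  omega

theorem variance_hetero_info_density (a b P : ℝ) (ha : 0 < a) (hb : 0 < b)
    (hP : 0 < P) (n1 n2 : ℕ) (hn : n2 ≤ n1)
    (x : Fin n1 → ℝ) (hx : ∑ i, x i ^ 2 = n1 * P) :
    variance
      (fun z : Fin n1 → ℝ =>
        (1 / (n1 : ℝ)) *
          ∑ i : Fin n1,
            (if (i : ℕ) < n2 then infoDensity1 a P (x i) (z i)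
             else infoDensity1 b P (x i) (z i)))
      (Measure.pi fun _ : Fin n1 => gaussianReal 0 1) =
      (1 / (n1 : ℝ)) * (1 / 4 *
          (((n2 : ℝ) / n1 * (2 * a ^ 2 * P ^ 2) + 4 * a * P) / (1 + a * P) ^ 2 +
            (1 - (n2 : ℝ) / n1) * (2 * b ^ 2 * P ^ 2) / (1 + b * P) ^ 2)) +
        (1 / (n1 : ℝ) ^ 2) * (b / (1 + b * P) ^ 2 - a / (1 + a * P) ^ 2) *
          ∑ i : Fin n1, if n2 ≤ (i : ℕ) then x i ^ 2 else 0 := by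
  set γ : Fin n1 → ℝ := fun i => if (i : ℕ) < n2 then a else b with hγ
  have hγpos (i : Fin n1) : 0 < γ i := by simp only [hγ]; split_ifs <;> assumption
  have hγP (i : Fin n1) : 0 < 1 + γ i * P := by have := hγpos i; positivity
  have hletter (i : Fin n1) (t : ℝ) :
      (if (i : ℕ) < n2 then infoDensity1 a P (x i) t else infoDensity1 b P (x i) t)
        = infoDensity1 (γ i) P (x i) t := by
    simp only [hγ]; split_ifs <;> rfl
  simp_rw [hletter]
  rw [variance_const_mul, variance_fun_sum_pi fun i =>
    memLp_two_infoDensity1 (hγpos i).le (hγP i) (x i)]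
  simp_rw [variance_infoDensity1 (hγpos _).le (hγP _)]
  have hsplit (i : Fin n1) :
      γ i * x i ^ 2 / (1 + γ i * P) ^ 2 + (γ i * P) ^ 2 / (2 * (1 + γ i * P) ^ 2)
        = a / (1 + a * P) ^ 2 * x i ^ 2
          + (if (i : ℕ) < n2 then (a * P) ^ 2 / (2 * (1 + a * P) ^ 2)
              else (b * P) ^ 2 / (2 * (1 + b * P) ^ 2))
          + (b / (1 + b * P) ^ 2 - a / (1 + a * P) ^ 2)
            * (if n2 ≤ (i : ℕ) then x i ^ 2 else 0) := by
    simp only [hγ]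
    split_ifs <;> first | omega | ring
  simp_rw [hsplit]
  rw [Finset.sum_add_distrib, Finset.sum_add_distrib, ← Finset.mul_sum, ← Finset.mul_sum, hx,
    Fin.sum_ite_val_lt hn, nsmul_eq_mul, nsmul_eq_mul, Nat.cast_sub hn]
  rcases eq_or_ne (n1 : ℝ) 0 with hn1 | hn1
  · simp [hn1]
  · field_simp
    ring
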